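/- The five vectors |0⟩(|0⟩−|1⟩), (|0⟩−|1⟩)|2⟩, |2⟩(|1⟩−|2⟩), (|1⟩−|2⟩)|0⟩, (|0⟩+|1⟩+|2⟩)(|0⟩+|1⟩+|2⟩) form an unextendible product basis in ℂ^3 ⊗ ℂ^3: they are pairwise orthogonal product states, and no nonzero product state u⊗v is orthogonal to all five. -/

import Mathlib

/-! The inner product of `u ⊗ v` with `tA k ⊗ tB k` factors as `⟨tA k, u⟩ ⟨tB k, v⟩`, so if
`u ⊗ v` is orthogonal to all five tiles then for each `k` either `u ⊥ tA k` or `v ⊥ tB k`.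
By pigeonhole one of the two happens for at least three indices. But any three of the `tA k`
span `ℂ³`, and so do any three of the `tB k` (which are the `tA k` reindexed), hence `u = 0`
or `v = 0`. -/
noncomputable section

def ket (i : Fin 3) : Fin 3 → ℂ := fun j => if j = i then 1 else 0

/-- The A-parts of the Tiles UPB in ℂ³⊗ℂ³. -/
def tA : Fin 5 → (Fin 3 → ℂ)
  | 0 => ket 0
  | 1 => ket 0 - ket 1
  | 2 => ket 2
  | 3 => ket 1 - ket 2
  | 4 => ket 0 + ket 1 + ket 2

/-- The B-parts of the Tiles UPB in ℂ³⊗ℂ³. -/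
def tB : Fin 5 → (Fin 3 → ℂ)
  | 0 => ket 0 - ket 1
  | 1 => ket 2
  | 2 => ket 1 - ket 2
  | 3 => ket 0
  | 4 => ket 0 + ket 1 + ket 2

/-- The Tiles UPB in ℂ³⊗ℂ³. -/
def tiles : Fin 5 → (Fin 3 × Fin 3 → ℂ) := fun k x => tA k x.1 * tB k x.2

open Finset

section ProductStates

variable {R α β ι : Type*}

theorem sum_star_mul_prod_eq_dotProduct_mul [Fintype α] [Fintype β] [CommSemiring R] [StarRing R]
    (a u : α → R) (b v : β → R) :
    ∑ x : α × β, star (a x.1 * b x.2) * (u x.1 * v x.2) = (star a ⬝ᵥ u) * (star b ⬝ᵥ v) := by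
  simp only [dotProduct, Fintype.sum_mul_sum, Fintype.sum_prod_type, star_mul', Pi.star_apply]
  exact sum_congr rfl fun i _ => sum_congr rfl fun j _ => by ring

theorem fun_mul_fst_snd_eq_zero_iff [MulZeroClass R] [NoZeroDivisors R] {u : α → R} {v : β → R} :
    (fun x : α × β => u x.1 * v x.2) = 0 ↔ u = 0 ∨ v = 0 := by
  refine ⟨fun h => ?_, ?_⟩
  · by_contra! huv
    obtain ⟨i, hi⟩ := Function.ne_iff.1 huv.1
    obtain ⟨j, hj⟩ := Function.ne_iff.1 huv.2
    exact mul_ne_zero hi hj (congrFun h (i, j))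
  · rintro (rfl | rfl) <;> funext x <;> simp

/-- Any `m` of the vectors `a k` span, phrased as: only `0` is orthogonal to all of them. -/
def OrthTotalOfCard [Fintype α] [Star R] [Mul R] [AddCommMonoid R] (m : ℕ) (a : ι → α → R) :
    Prop :=
  ∀ s : Finset ι, m ≤ #s → ∀ u : α → R, (∀ k ∈ s, star (a k) ⬝ᵥ u = 0) → u = 0

theorem OrthTotalOfCard.comp_embedding {κ : Type*} [Fintype α] [Star R] [Mul R] [AddCommMonoid R]
    {m : ℕ} {a : ι → α → R} (ha : OrthTotalOfCard m a) (σ : κ ↪ ι) : OrthTotalOfCard m (a ∘ σ) := by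
  intro s hs u hu
  refine ha (s.map σ) (by rwa [card_map]) u ?_
  simp only [mem_map, forall_exists_index, and_imp]
  rintro _ k hk rfl
  exact hu k hk

theorem le_card_filter_or_le_card_filter [Fintype ι] {p q : ι → Prop} [DecidablePred p]
    [DecidablePred q] (h : ∀ k, p k ∨ q k) {m n : ℕ} (hmn : m + n ≤ Fintype.card ι + 1) :
    m ≤ #{k | p k} ∨ n ≤ #{k | q k} := by
  have : Fintype.card ι ≤ #{k | p k} + #{k | q k} := by
    classical
    calc Fintype.card ι = #(univ.filter p ∪ univ.filter q) := by
          rw [← filter_or, filter_true_of_mem fun k _ => h k, card_univ]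
      _ ≤ _ := card_union_le _ _
  omega

-- The unextendibility criterion of Bennett et al. for the product vectors `a k ⊗ b k`.
theorem eq_zero_or_eq_zero_of_orthTotalOfCard [Fintype ι] [Fintype α] [Fintype β] [Semiring R]
    [NoZeroDivisors R] [Star R] {m n : ℕ} {a : ι → α → R} {b : ι → β → R} (ha : OrthTotalOfCard m a)
    (hb : OrthTotalOfCard n b) (hmn : m + n ≤ Fintype.card ι + 1) {u : α → R} {v : β → R}
    (h : ∀ k, (star (a k) ⬝ᵥ u) * (star (b k) ⬝ᵥ v) = 0) : u = 0 ∨ v = 0 := by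
  classical
  rcases le_card_filter_or_le_card_filter (fun k => mul_eq_zero.1 (h k)) hmn with hu | hv
  · exact Or.inl (ha _ hu u fun k hk => (mem_filter.1 hk).2)
  · exact Or.inr (hb _ hv v fun k hk => (mem_filter.1 hk).2)

end ProductStates

theorem star_tA_dotProduct (k : Fin 5) (u : Fin 3 → ℂ) :
    star (tA k) ⬝ᵥ u = ![u 0, u 0 - u 1, u 2, u 1 - u 2, u 0 + u 1 + u 2] k := by
  fin_cases k <;> simp [tA, ket, dotProduct, Fin.sum_univ_three, ← sub_eq_add_neg]

theorem tB_eq_tA_comp : tB = tA ∘ Fin.cycleRange 3 := by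
  funext k; fin_cases k <;> rfl

theorem tA_ne_zero (k : Fin 5) : tA k ≠ 0 := by
  fin_cases k <;> simp [tA, ket, funext_iff, Fin.forall_fin_succ]

theorem tB_ne_zero (k : Fin 5) : tB k ≠ 0 := by
  rw [tB_eq_tA_comp]
  exact tA_ne_zero _

theorem orthTotalOfCard_tA : OrthTotalOfCard 3 tA := by
  intro s hs u hu
  obtain ⟨a, b, c, ha, hb, hc, hab, hac, hbc⟩ := two_lt_card_iff.1 hs
  have h1 := star_tA_dotProduct a u ▸ hu a ha
  have h2 := star_tA_dotProduct b u ▸ hu b hb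
  have h3 := star_tA_dotProduct c u ▸ hu c hc
  clear hu ha hb hc hs
  suffices u 0 = 0 ∧ u 1 = 0 ∧ u 2 = 0 by
    obtain ⟨hu0, hu1, hu2⟩ := this
    funext i; fin_cases i <;> assumption
  fin_cases a <;> fin_cases b <;> fin_cases c <;>
    simp only [Fin.zero_eta, Fin.mk_one, Fin.reduceFinMk, Matrix.cons_val, Matrix.cons_val_zero,
      Matrix.cons_val_one] at h1 h2 h3 hab hac hbc <;> grind

theorem orthTotalOfCard_tB : OrthTotalOfCard 3 tB :=
  tB_eq_tA_comp ▸ orthTotalOfCard_tA.comp_embedding (Fin.cycleRange 3).toEmbedding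

theorem star_tA_dotProduct_mul_star_tB_dotProduct {k l : Fin 5} (hkl : k ≠ l) :
    (star (tA k) ⬝ᵥ tA l) * (star (tB k) ⬝ᵥ tB l) = 0 := by
  fin_cases k <;> fin_cases l <;> simp [tA, tB, ket, dotProduct, Fin.sum_univ_three] at hkl ⊢

/-- The five Tiles vectors form a UPB in ℂ³⊗ℂ³: they are pairwise orthogonal
nonzero product states, and no nonzero product state is orthogonal to all five. -/
theorem stmt_11 :
    (∀ k, tiles k ≠ 0) ∧
    (∀ k, ∃ u v : Fin 3 → ℂ, tiles k = fun x => u x.1 * v x.2) ∧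
    (∀ k l, k ≠ l → ∑ x : Fin 3 × Fin 3, (starRingEnd ℂ) (tiles k x) * tiles l x = 0) ∧
    (∀ u v : Fin 3 → ℂ,
      (∀ k, ∑ x : Fin 3 × Fin 3, (starRingEnd ℂ) (tiles k x) * (u x.1 * v x.2) = 0) →
      (fun x : Fin 3 × Fin 3 => u x.1 * v x.2) = 0) := by
  have inner_tiles : ∀ k (u v : Fin 3 → ℂ),
      ∑ x : Fin 3 × Fin 3, (starRingEnd ℂ) (tiles k x) * (u x.1 * v x.2) =
        (star (tA k) ⬝ᵥ u) * (star (tB k) ⬝ᵥ v) :=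
    fun k u v => sum_star_mul_prod_eq_dotProduct_mul (tA k) u (tB k) v
  refine ⟨fun k h => ?_, fun k => ⟨tA k, tB k, rfl⟩, fun k l hkl => ?_, fun u v h => ?_⟩
  · exact (fun_mul_fst_snd_eq_zero_iff.1 h).elim (tA_ne_zero k) (tB_ne_zero k)
  · exact (inner_tiles k (tA l) (tB l)).trans (star_tA_dotProduct_mul_star_tB_dotProduct hkl)
  · refine fun_mul_fst_snd_eq_zero_iff.2 <| eq_zero_or_eq_zero_of_orthTotalOfCard
      orthTotalOfCard_tA orthTotalOfCard_tB (by simp) fun k => ?_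
    rw [← inner_tiles]
    exact h k

end
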